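/- arXiv:2512.16655 — 3 statements merged into one kernel-verified Lean document; each statement's English description precedes it below -/
import Mathlib

section
/- (Generalized Newton–Maclaurin inequality) Let λ ∈ Γ_k and let integers k, l, r, s satisfy k > l ≥ 0, r > s ≥ 0, k ≥ r, and l ≥ s. Then ( (σ_k(λ)/C_n^k) / (σ_l(λ)/C_n^l) )^{1/(k−l)} ≤ ( (σ_r(λ)/C_n^r) / (σ_s(λ)/C_n^s) )^{1/(r−s)}. -/
/-
Newton's inequalities `E_m E_{m+2} ≤ E_{m+1}²` for the normalized means `E_j = σ_j / C_n^j` hold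
for every real vector. Differentiating `∏ (X - λ_i)` keeps all roots real (Rolle) and, up to a
common factor, preserves the low-order `E_j`; this reduces the inequality to `m + 2` numbers,
where it is Cauchy–Schwarz for the products `∏_{j ≠ i} λ_j`.
On `Γ_k` the `E_j` with `j ≤ k` are positive, so `j ↦ log E_j` is concave on `{0, …, k}`, and the
theorem says that the chord slopes of a concave sequence decrease when either endpoint moves left.
-/

open Finset

/-- The `k`-th elementary symmetric function of the entries of `lam` indexed by `s`. -/
noncomputable def esymmOn {n : ℕ} (s : Finset (Fin n)) (k : ℕ) (lam : Fin n → ℝ) : ℝ :=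
  ∑ S ∈ s.powersetCard k, ∏ i ∈ S, lam i

/-- `σ_k(λ)`. -/
noncomputable def esymm {n : ℕ} (k : ℕ) (lam : Fin n → ℝ) : ℝ :=
  esymmOn Finset.univ k lam

/-- `σ_k(λ|i)`: the `k`-th elementary symmetric function with the `i`-th entry deleted. -/
noncomputable def esymmDel {n : ℕ} (i : Fin n) (k : ℕ) (lam : Fin n → ℝ) : ℝ :=
  esymmOn (Finset.univ.erase i) k lam

/-- `σ_k(λ|ij)`: the `k`-th elementary symmetric function with the `i`-th and `j`-th
entries deleted. -/
noncomputable def esymmDel2 {n : ℕ} (i j : Fin n) (k : ℕ) (lam : Fin n → ℝ) : ℝ :=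
  esymmOn ((Finset.univ.erase i).erase j) k lam

/-- The Gårding cone `Γ_k`: all `λ` with `σ_i(λ) > 0` for `1 ≤ i ≤ k`. -/
def GardingCone (n k : ℕ) : Set (Fin n → ℝ) :=
  {lam | ∀ i : ℕ, 1 ≤ i → i ≤ k → 0 < esymm i lam}

open Polynomial

section ConcaveSequence

variable {g : ℕ → ℝ}

theorem antitoneOn_sub_of_concave {k : ℕ}
    (hg : ∀ m, m + 2 ≤ k → g m + g (m + 2) ≤ 2 * g (m + 1)) :
    AntitoneOn (fun i => g (i + 1) - g i) (Set.Iio k) :=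
  antitoneOn_of_add_one_le Set.ordConnected_Iio fun m _ _ hm => by
    have := hg m (by simp at hm; omega)
    linarith

theorem mul_sub_le_mul_sub_of_increment_bounds {a b c : ℕ} (hab : a ≤ b) (hbc : b ≤ c) (x : ℝ)
    (hlow : ∀ i ∈ Ico a b, x ≤ g (i + 1) - g i) (hhigh : ∀ i ∈ Ico b c, g (i + 1) - g i ≤ x) :
    ((b : ℝ) - a) * (g c - g b) ≤ ((c : ℝ) - b) * (g b - g a) := by
  have hleft : ((b : ℝ) - a) * x ≤ g b - g a := by
    simpa only [sum_Ico_sub g hab, Nat.card_Ico, nsmul_eq_mul, Nat.cast_sub hab]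
      using card_nsmul_le_sum _ _ x hlow
  have hright : g c - g b ≤ ((c : ℝ) - b) * x := by
    simpa only [sum_Ico_sub g hbc, Nat.card_Ico, nsmul_eq_mul, Nat.cast_sub hbc]
      using sum_le_card_nsmul _ _ x hhigh
  have hba : (0 : ℝ) ≤ b - a := by simp [hab]
  have hcb : (0 : ℝ) ≤ c - b := by simp [hbc]
  calc ((b : ℝ) - a) * (g c - g b) ≤ ((b : ℝ) - a) * (((c : ℝ) - b) * x) :=
        mul_le_mul_of_nonneg_left hright hba
    _ = ((c : ℝ) - b) * (((b : ℝ) - a) * x) := by ring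
    _ ≤ ((c : ℝ) - b) * (g b - g a) := mul_le_mul_of_nonneg_left hleft hcb

theorem slope_le_slope_of_antitoneOn_sub {k l r s : ℕ}
    (hd : AntitoneOn (fun i => g (i + 1) - g i) (Set.Iio k))
    (hsl : s ≤ l) (hlk : l < k) (hsr : s < r) (hrk : r ≤ k) :
    (g k - g l) / ((k : ℝ) - l) ≤ (g r - g s) / ((r : ℝ) - s) := by
  -- Both chords are compared with the chord over `[s, k]`, splitting the increments at `l`
  -- and at `r`.
  have hmem : ∀ {i}, i < k → i ∈ Set.Iio k := id
  have hleft := mul_sub_le_mul_sub_of_increment_bounds hsl hlk.le (g (l + 1) - g l)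
    (fun i hi => by simp only [mem_Ico] at hi; exact hd (hmem (by omega)) (hmem hlk) hi.2.le)
    (fun i hi => by simp only [mem_Ico] at hi; exact hd (hmem hlk) (hmem hi.2) hi.1)
  obtain ⟨r, rfl⟩ : ∃ r', r = r' + 1 := ⟨r - 1, by omega⟩
  have hright := mul_sub_le_mul_sub_of_increment_bounds (g := g) hsr.le hrk (g (r + 1) - g r)
    (fun i hi => by
      simp only [mem_Ico] at hi; exact hd (hmem (by omega)) (hmem (by omega)) (by omega))
    (fun i hi => by simp only [mem_Ico] at hi; exact hd (hmem (by omega)) (hmem hi.2) (by omega))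
  have hkl : (0 : ℝ) < k - l := sub_pos.mpr (by exact_mod_cast hlk)
  have hrs : (0 : ℝ) < (r + 1 : ℕ) - s := sub_pos.mpr (by exact_mod_cast hsr)
  have hks : (0 : ℝ) < k - s := sub_pos.mpr (by exact_mod_cast (hsl.trans_lt hlk))
  have hchord_lk : ((k : ℝ) - s) * (g k - g l) ≤ ((k : ℝ) - l) * (g k - g s) := by
    linear_combination hleft
  have hchord_sk : (((r + 1 : ℕ) : ℝ) - s) * (g k - g s) ≤ ((k : ℝ) - s) * (g (r + 1) - g s) := by
    linear_combination hright
  rw [div_le_div_iff₀ hkl hrs]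
  refine le_of_mul_le_mul_left ?_ hks
  nlinarith [mul_le_mul_of_nonneg_left hchord_lk hrs.le, mul_le_mul_of_nonneg_left hchord_sk hkl.le]

end ConcaveSequence

section Esymm

variable {ι R : Type*} [CommSemiring R]

theorem Multiset.esymm_card (μ : Multiset R) : μ.esymm (Multiset.card μ) = μ.prod := by
  simp [Multiset.esymm, Multiset.powersetCard_self]

theorem Multiset.esymm_eq_zero_of_card_lt {μ : Multiset R} {j : ℕ} (h : Multiset.card μ < j) :
    μ.esymm j = 0 := by
  simp [Multiset.esymm, Multiset.powersetCard_eq_empty _ h]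

theorem Finset.esymm_card (s : Finset ι) (f : ι → R) : (s.val.map f).esymm #s = ∏ i ∈ s, f i := by
  simpa using (s.val.map f).esymm_card

variable [DecidableEq ι]

theorem Finset.sum_esymm_erase (s : Finset ι) (f : ι → R) (j : ℕ) :
    ∑ i ∈ s, ((s.erase i).val.map f).esymm j = (#s - j) • (s.val.map f).esymm j := by
  simp only [Finset.esymm_map_val, Finset.smul_sum]
  calc ∑ i ∈ s, ∑ t ∈ (s.erase i).powersetCard j, ∏ x ∈ t, f x
      = ∑ i ∈ s, ∑ t ∈ s.powersetCard j, if i ∉ t then ∏ x ∈ t, f x else 0 := by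
        refine sum_congr rfl fun i _ => ?_
        rw [← sum_filter]
        congr 1
        ext t
        simp only [mem_powersetCard, mem_filter, subset_erase]
        tauto
    _ = ∑ t ∈ s.powersetCard j, ∑ i ∈ s, if i ∉ t then ∏ x ∈ t, f x else 0 := sum_comm
    _ = ∑ t ∈ s.powersetCard j, (#s - j) • ∏ x ∈ t, f x := by
        refine sum_congr rfl fun t ht => ?_
        rw [mem_powersetCard] at ht
        rw [← sum_filter, sum_const, ← sdiff_eq_filter, card_sdiff_of_subset ht.1, ht.2]

theorem Finset.two_mul_esymm_eq_sum_sum_prod (s : Finset ι) (f : ι → R) {d : ℕ} (hs : #s = d + 2) :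
    2 * (s.val.map f).esymm d = ∑ i ∈ s, ∑ j ∈ s.erase i, ∏ x ∈ (s.erase i).erase j, f x := by
  have h := s.sum_esymm_erase f d
  rw [hs, show d + 2 - d = 2 by omega, nsmul_eq_mul, Nat.cast_ofNat] at h
  rw [← h]
  refine sum_congr rfl fun i hi => ?_
  have hi' := (s.erase i).sum_esymm_erase f d
  rw [card_erase_of_mem hi, hs, show d + 2 - 1 - d = 1 by omega, one_smul] at hi'
  rw [← hi']
  refine sum_congr rfl fun j hj => ?_
  have hcard : #((s.erase i).erase j) = d := by
    rw [card_erase_of_mem hj, card_erase_of_mem hi, hs]; rfl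
  exact hcard ▸ ((s.erase i).erase j).esymm_card f

theorem Finset.two_mul_card_mul_esymm_le (s : Finset ι) (f : ι → ℝ)
    {d : ℕ} (hs : #s = d + 2) :
    2 * (d + 2) * ((s.val.map f).esymm d * (s.val.map f).esymm (d + 2))
      ≤ (d + 1) * (s.val.map f).esymm (d + 1) ^ 2 := by
  set A : ι → ℝ := fun i => ∏ j ∈ s.erase i, f j
  have hcard_erase : ∀ i ∈ s, #(s.erase i) = d + 1 := fun i hi => by
    rw [card_erase_of_mem hi, hs]; rfl
  have htop : (s.val.map f).esymm (d + 2) = ∏ i ∈ s, f i := hs ▸ s.esymm_card f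
  have hsub : (s.val.map f).esymm (d + 1) = ∑ i ∈ s, A i := by
    have h := s.sum_esymm_erase f (d + 1)
    rw [hs, show d + 2 - (d + 1) = 1 by omega, one_smul] at h
    rw [← h]
    exact sum_congr rfl fun i hi => hcard_erase i hi ▸ (s.erase i).esymm_card f
  have hpair : ∀ i ∈ s, ∀ j ∈ s.erase i,
      A i * A j = (∏ x ∈ s, f x) * ∏ x ∈ (s.erase i).erase j, f x := fun i hi j hj => by
    have hAi : A i = f j * ∏ x ∈ (s.erase i).erase j, f x := (mul_prod_erase _ f hj).symm
    have hprod : ∏ x ∈ s, f x = f j * A j := (mul_prod_erase _ f (mem_of_mem_erase hj)).symm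
    rw [hAi, hprod]
    ring
  have hsq : (∑ i ∈ s, A i) ^ 2
      = ∑ i ∈ s, A i ^ 2 + (∏ i ∈ s, f i) * (2 * (s.val.map f).esymm d) := by
    rw [s.two_mul_esymm_eq_sum_sum_prod f hs, sq, sum_mul_sum, mul_sum, ← sum_add_distrib]
    refine sum_congr rfl fun i hi => ?_
    rw [← add_sum_erase _ _ hi, mul_sum, sq]
    congr 1
    exact sum_congr rfl fun j hj => hpair i hi j hj
  have hcs : (∑ i ∈ s, A i) ^ 2 ≤ (d + 2) * ∑ i ∈ s, A i ^ 2 := by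
    simpa [hs] using sq_sum_le_card_mul_sum_sq (s := s) (f := A)
  rw [htop, hsub]
  linear_combination -(d + 2 : ℝ) * hsq + hcs

end Esymm

theorem Multiset.two_mul_card_mul_esymm_le {ν : Multiset ℝ} {d : ℕ} (h : card ν = d + 2) :
    2 * (d + 2) * (ν.esymm d * ν.esymm (d + 2)) ≤ (d + 1) * ν.esymm (d + 1) ^ 2 := by
  classical
  rw [← ν.map_univ_coe]
  exact univ.two_mul_card_mul_esymm_le _ (by rw [card_univ, Multiset.card_coe, h])

noncomputable def esymmMean (μ : Multiset ℝ) (j : ℕ) : ℝ :=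
  μ.esymm j / (Multiset.card μ).choose j

theorem esymmMean_mul_le_sq_of_card_eq {ν : Multiset ℝ} {d : ℕ} (h : Multiset.card ν = d + 2) :
    esymmMean ν d * esymmMean ν (d + 2) ≤ esymmMean ν (d + 1) ^ 2 := by
  have hd : ((d + 2).choose d : ℝ) = (d + 2) * (d + 1) / 2 := by
    rw [Nat.choose_symm_add, Nat.cast_choose_two]; push_cast; ring
  have hd1 : ((d + 2).choose (d + 1) : ℝ) = d + 2 := by
    rw [Nat.choose_succ_self_right]; push_cast; ring
  simp only [esymmMean, h, hd, hd1, Nat.choose_self, Nat.cast_one, div_one]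
  rw [div_pow, div_mul_eq_mul_div, div_le_div_iff₀ (by positivity) (by positivity)]
  nlinarith [ν.two_mul_card_mul_esymm_le h, sq_nonneg (ν.esymm (d + 1))]

theorem Nat.descFactorial_mul_choose_eq {d u j : ℕ} (hj : j ≤ d) :
    (d - j + u).descFactorial u * (d + u).choose j = (d + u).descFactorial u * d.choose j := by
  have h := Nat.choose_mul (n := d + u) (k := d - j + u) (s := u) (by omega)
  rw [Nat.choose_symm_of_eq_add (by omega : d + u = d - j + u + j), Nat.add_sub_cancel,
    Nat.add_sub_cancel, Nat.choose_symm hj] at h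
  rw [Nat.descFactorial_eq_factorial_mul_choose, Nat.descFactorial_eq_factorial_mul_choose,
    mul_assoc, mul_comm (Nat.choose _ _), h, mul_assoc]

theorem Polynomial.Splits.derivative {p : ℝ[X]} (hp : p.Splits) : p.derivative.Splits := by
  rw [splits_iff_card_roots] at hp ⊢
  by_cases h0 : p.natDegree = 0
  · rw [eq_C_of_natDegree_eq_zero h0, derivative_C]
    simp
  · have := natDegree_derivative_lt h0
    have := card_roots' p.derivative
    have := card_roots_le_derivative p
    omega

theorem Polynomial.Splits.iterate_derivative {p : ℝ[X]} (hp : p.Splits) (u : ℕ) :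
    (Polynomial.derivative^[u] p).Splits := by
  induction u with
  | zero => exact hp
  | succ u ih => rw [Function.iterate_succ_apply']; exact ih.derivative

theorem coeff_iterate_derivative_prod_X_sub_C (μ : Multiset ℝ) {i u : ℕ}
    (h : i + u ≤ Multiset.card μ) :
    (derivative^[u] (μ.map fun a => X - C a).prod).coeff i
      = (i + u).descFactorial u *
          ((-1) ^ (Multiset.card μ - (i + u)) * μ.esymm (Multiset.card μ - (i + u))) := by
  rw [coeff_iterate_derivative, Multiset.prod_X_sub_C_coeff μ h, nsmul_eq_mul]

theorem exists_esymmMean_eq_mul (μ : Multiset ℝ) {d u : ℕ} (h : Multiset.card μ = d + u) :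
    ∃ ν : Multiset ℝ, Multiset.card ν = d ∧
      ∃ c : ℝ, ∀ j ≤ d, esymmMean μ j = c * esymmMean ν j := by
  set Q := derivative^[u] (μ.map fun a => X - C a).prod
  have hcoeff : ∀ i ≤ d, Q.coeff i
      = (i + u).descFactorial u * ((-1) ^ (d - i) * μ.esymm (d - i)) := fun i hi => by
    rw [coeff_iterate_derivative_prod_X_sub_C μ (by omega), h,
      show d + u - (i + u) = d - i by omega]
  have hdeg : Q.natDegree = d := by
    refine le_antisymm ((natDegree_iterate_derivative _ u).trans ?_) (le_natDegree_of_ne_zero ?_)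
    · rw [natDegree_multiset_prod_X_sub_C_eq_card, h, Nat.add_sub_cancel]
    · rw [hcoeff d le_rfl, Nat.sub_self]
      simp [Multiset.esymm, Nat.descFactorial_eq_zero_iff_lt]
  have hsplit : Q.Splits := by
    refine Splits.iterate_derivative ?_ u
    rw [splits_iff_card_roots, roots_multiset_prod_X_sub_C, natDegree_multiset_prod_X_sub_C_eq_card]
  refine ⟨Q.roots, by rw [splits_iff_card_roots.mp hsplit, hdeg],
    Q.leadingCoeff / (d + u).descFactorial u, fun j hj => ?_⟩
  have hvieta := coeff_eq_esymm_roots_of_splits hsplit (k := d - j) (by omega)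
  rw [hcoeff (d - j) (by omega), hdeg, Nat.sub_sub_self hj] at hvieta
  have hroots : Q.leadingCoeff * Q.roots.esymm j
      = (d - j + u).descFactorial u * μ.esymm j := by
    refine mul_left_cancel₀ (pow_ne_zero j (neg_ne_zero.mpr one_ne_zero) : (-1 : ℝ) ^ j ≠ 0) ?_
    linear_combination -hvieta
  have hchoose : ((d - j + u).descFactorial u : ℝ) * (d + u).choose j
      = (d + u).descFactorial u * d.choose j := by
    exact_mod_cast Nat.descFactorial_mul_choose_eq hj
  have hD : ((d + u).descFactorial u : ℝ) ≠ 0 := by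
    exact_mod_cast (Nat.descFactorial_pos.mpr (by omega)).ne'
  have hn : ((d + u).choose j : ℝ) ≠ 0 := by exact_mod_cast (Nat.choose_pos (by omega)).ne'
  have hd : (d.choose j : ℝ) ≠ 0 := by exact_mod_cast (Nat.choose_pos hj).ne'
  rw [esymmMean, esymmMean, h, splits_iff_card_roots.mp hsplit, hdeg]
  field_simp
  linear_combination -μ.esymm j * hchoose - ((d + u).choose j : ℝ) * hroots

theorem esymmMean_mul_le_sq (μ : Multiset ℝ) (m : ℕ) :
    esymmMean μ m * esymmMean μ (m + 2) ≤ esymmMean μ (m + 1) ^ 2 := by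
  rcases lt_or_ge (Multiset.card μ) (m + 2) with hlt | hle
  · have hzero : esymmMean μ (m + 2) = 0 := by
      rw [esymmMean, Multiset.esymm_eq_zero_of_card_lt hlt, zero_div]
    rw [hzero, mul_zero]
    positivity
  · obtain ⟨ν, hν, c, hc⟩ := exists_esymmMean_eq_mul μ (d := m + 2) (u := Multiset.card μ - (m + 2))
      (by omega)
    rw [hc m (by omega), hc (m + 2) le_rfl, hc (m + 1) (by omega)]
    nlinarith [mul_le_mul_of_nonneg_left (esymmMean_mul_le_sq_of_card_eq hν) (sq_nonneg c)]

theorem esymm_div_choose_eq_esymmMean {n : ℕ} (lam : Fin n → ℝ) (j : ℕ) :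
    esymm j lam / n.choose j = esymmMean ((univ : Finset (Fin n)).val.map lam) j := by
  rw [esymmMean, Multiset.card_map, card_val, card_univ, Fintype.card_fin, esymm, esymmOn,
    Finset.esymm_map_val]

theorem esymm_div_choose_pos {n k j : ℕ} {lam : Fin n → ℝ} (hlam : lam ∈ GardingCone n k)
    (hj : j ≤ k) : 0 < esymm j lam / n.choose j := by
  rcases Nat.eq_zero_or_pos j with rfl | hj0
  · simp [esymm, esymmOn]
  · have hσ := hlam j hj0 hj
    have hjn : j ≤ n := by
      by_contra! hnj
      rw [esymm, esymmOn, powersetCard_eq_empty.mpr (by simpa using hnj), sum_empty] at hσ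
      exact hσ.false
    exact div_pos hσ (by exact_mod_cast Nat.choose_pos hjn)

theorem generalized_newton_maclaurin (n k l r s : ℕ)
    (lam : Fin n → ℝ) (hGamma : lam ∈ GardingCone n k)
    (hkl : k > l) (hrs : r > s) (hkr : k ≥ r) (hls : l ≥ s) :
    ((esymm k lam / (n.choose k : ℝ)) / (esymm l lam / (n.choose l : ℝ)))
        ^ ((1 : ℝ) / ((k : ℝ) - (l : ℝ))) ≤
      ((esymm r lam / (n.choose r : ℝ)) / (esymm s lam / (n.choose s : ℝ)))
        ^ ((1 : ℝ) / ((r : ℝ) - (s : ℝ))) := by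
  set μ := (univ : Finset (Fin n)).val.map lam
  set g : ℕ → ℝ := fun j => Real.log (esymmMean μ j)
  have hpos : ∀ j ≤ k, 0 < esymmMean μ j := fun j hj =>
    esymm_div_choose_eq_esymmMean lam j ▸ esymm_div_choose_pos hGamma hj
  have hexp : ∀ j ≤ k, esymm j lam / n.choose j = Real.exp (g j) := fun j hj => by
    rw [esymm_div_choose_eq_esymmMean, Real.exp_log (hpos j hj)]
  have hconcave : ∀ m, m + 2 ≤ k → g m + g (m + 2) ≤ 2 * g (m + 1) := fun m hm => by
    have h := Real.log_le_log (mul_pos (hpos m (by omega)) (hpos (m + 2) hm))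
      (esymmMean_mul_le_sq μ m)
    rwa [Real.log_mul (hpos m (by omega)).ne' (hpos (m + 2) hm).ne', Real.log_pow,
      Nat.cast_ofNat] at h
  rw [hexp k le_rfl, hexp l hkl.le, hexp r hkr, hexp s (by omega), ← Real.exp_sub,
    ← Real.exp_sub, ← Real.exp_mul, ← Real.exp_mul, Real.exp_le_exp, mul_one_div, mul_one_div]
  exact slope_le_slope_of_antitoneOn_sub (antitoneOn_sub_of_concave hconcave) hls hkl hrs hkr
end

section
/- Let n ≥ 2, λ = (λ_1,…,λ_n) ∈ ℝⁿ, 1 ≤ k ≤ n, and let i ≠ j be distinct indices. Then σ_{n−1}(λ|i)·σ_{k−1}(λ|j) − σ_{n−1}(λ|j)·σ_{k−1}(λ|i) = (λ_j − λ_i)·σ_{n−2}(λ|ij)·σ_{k−1}(λ|ij). -/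
open Finset

lemma esymmOn_insert {n : ℕ} (t : Finset (Fin n)) (j : Fin n) (hj : j ∉ t) (m : ℕ)
    (lam : Fin n → ℝ) :
    (∑ S ∈ (insert j t).powersetCard (m+1), ∏ i ∈ S, lam i) =
      (∑ S ∈ t.powersetCard (m+1), ∏ i ∈ S, lam i) +
        lam j * ∑ S ∈ t.powersetCard m, ∏ i ∈ S, lam i := by
  rw [powersetCard_succ_insert hj, sum_union]
  · congr 1
    rw [sum_image, mul_sum]
    · refine sum_congr rfl fun S hS => ?_
      rw [prod_insert]
      intro hjS
      exact hj ((mem_powersetCard.1 hS).1 hjS)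
    · intro a ha b hb hab
      have hja : j ∉ a := fun h' => hj ((mem_powersetCard.1 ha).1 h')
      have hjb : j ∉ b := fun h' => hj ((mem_powersetCard.1 hb).1 h')
      ext x
      constructor <;> intro hx
      · have : x ∈ insert j b := hab ▸ mem_insert_of_mem hx
        rcases mem_insert.1 this with rfl | h
        · exact absurd hx hja
        · exact h
      · have : x ∈ insert j a := hab ▸ mem_insert_of_mem hx
        rcases mem_insert.1 this with rfl | h
        · exact absurd hx hjb
        · exact h
  · rw [disjoint_right]
    intro S hS hS'
    obtain ⟨T, hT, rfl⟩ := mem_image.1 hS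
    exact hj ((mem_powersetCard.1 hS').1 (mem_insert_self j T))

lemma esymmOn_zero_card {n : ℕ} (t : Finset (Fin n)) (m : ℕ) (hm : t.card < m)
    (lam : Fin n → ℝ) : esymmOn t m lam = 0 := by
  unfold esymmOn
  rw [powersetCard_eq_empty.2 hm, sum_empty]

lemma esymmOn_zero' {n : ℕ} (t : Finset (Fin n)) (lam : Fin n → ℝ) :
    esymmOn t 0 lam = 1 := by
  simp [esymmOn]

theorem sigma_del_top_identity (n k : ℕ) (hn : 2 ≤ n) (hk1 : 1 ≤ k) (hkn : k ≤ n)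
    (lam : Fin n → ℝ) (i j : Fin n) (hij : i ≠ j) :
    esymmDel i (n - 1) lam * esymmDel j (k - 1) lam -
        esymmDel j (n - 1) lam * esymmDel i (k - 1) lam =
      (lam j - lam i) * esymmDel2 i j (n - 2) lam * esymmDel2 i j (k - 1) lam := by
  set t : Finset (Fin n) := (Finset.univ.erase i).erase j with ht
  have htcard : t.card = n - 2 := by
    rw [ht, card_erase_of_mem, card_erase_of_mem (mem_univ i), card_univ, Fintype.card_fin]
    · omega
    · exact mem_erase.2 ⟨hij.symm, mem_univ j⟩
  have hi : Finset.univ.erase i = insert j t := by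
    rw [ht, insert_erase (mem_erase.2 ⟨hij.symm, mem_univ j⟩)]
  have hj : Finset.univ.erase j = insert i t := by
    rw [ht, erase_right_comm, insert_erase (mem_erase.2 ⟨hij, mem_univ i⟩)]
  have hjt : j ∉ t := notMem_erase _ _
  have hit : i ∉ t := by rw [ht, erase_right_comm]; exact notMem_erase _ _
  have key : ∀ m : ℕ, ∀ x : Fin n, x ∉ t →
      esymmOn (insert x t) (m+1) lam = esymmOn t (m+1) lam + lam x * esymmOn t m lam :=
    fun m x hx => esymmOn_insert t x hx m lam
  -- top degree: esymmOn t (n-1) = 0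
  have hzero : esymmOn t (n - 1) lam = 0 :=
    esymmOn_zero_card t (n - 1) (by omega) lam
  have hn1 : n - 1 = (n - 2) + 1 := by omega
  have hDi : esymmDel i (n-1) lam = lam j * esymmOn t (n-2) lam := by
    rw [esymmDel, hi, hn1, key (n-2) j hjt, ← hn1, hzero, zero_add]
  have hDj : esymmDel j (n-1) lam = lam i * esymmOn t (n-2) lam := by
    rw [esymmDel, hj, hn1, key (n-2) i hit, ← hn1, hzero, zero_add]
  have hD2n : esymmDel2 i j (n-2) lam = esymmOn t (n-2) lam := rfl
  have hD2k : esymmDel2 i j (k-1) lam = esymmOn t (k-1) lam := rfl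
  rw [hDi, hDj, hD2n, hD2k]
  rcases Nat.eq_or_lt_of_le hk1 with h1 | h2
  · have : k - 1 = 0 := by omega
    rw [this]
    unfold esymmDel
    rw [hi, hj, esymmOn_zero', esymmOn_zero', esymmOn_zero']
    ring
  · have hk2 : k - 1 = (k - 2) + 1 := by omega
    have hEi : esymmDel i (k-1) lam = esymmOn t (k-1) lam + lam j * esymmOn t (k-2) lam := by
      rw [esymmDel, hi, hk2, key (k-2) j hjt, ← hk2]
    have hEj : esymmDel j (k-1) lam = esymmOn t (k-1) lam + lam i * esymmOn t (k-2) lam := by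
      rw [esymmDel, hj, hk2, key (k-2) i hit, ← hk2]
    rw [hEi, hEj]
    ring
end

section
/- For 1 ≤ k ≤ n, let σ_k denote the polynomial function on n×n real matrices given by the sum of all k×k principal minors. If A is a diagonal matrix with diagonal entries λ = (λ_1,…,λ_n), then the partial derivative of σ_k with respect to the (i,j)-entry evaluated at A equals σ_{k−1}(λ|i) when i = j, and equals 0 when i ≠ j. -/
open Finset

/-- `σ_k(A)`: the sum of all `k × k` principal minors of a square matrix `A`,
a polynomial function of the matrix entries. -/
noncomputable def sumPrincipalMinors {n : ℕ} (k : ℕ) (A : Matrix (Fin n) (Fin n) ℝ) : ℝ :=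
  ∑ S ∈ (Finset.univ : Finset (Fin n)).powersetCard k,
    (A.submatrix (fun i : {x // x ∈ S} => (i : Fin n)) (fun i : {x // x ∈ S} => (i : Fin n))).det

/-!
The principal submatrix of `diagonal λ + t • single i j 1` on `S` is `diagonal λ_S`, plus
`t • single i j 1` when `i, j ∈ S`; expanding along row `i`, its determinant is
`∏_{S} λ + t · [i = j ∈ S] ∏_{S \ {i}} λ`. So `σ_k (diagonal λ + t • single i j 1)` is affine in
`t` with slope `[i = j] σ_{k-1}(λ|i)`, since `S ↦ S \ {i}` matches the `k`-subsets containing `i`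
with the `(k-1)`-subsets of the complement of `i`.
-/

theorem Finset.sum_powersetCard_succ_filter_mem {α β : Type*} [DecidableEq α] [AddCommMonoid β]
    {s : Finset α} {a : α} (ha : a ∈ s) (k : ℕ) (g : Finset α → β) :
    ∑ S ∈ powersetCard (k + 1) s with a ∈ S, g (S.erase a) =
      ∑ T ∈ powersetCard k (s.erase a), g T := by
  refine sum_nbij' (·.erase a) (insert a ·) ?_ ?_ ?_ ?_ fun _ _ => rfl
  · intro S hS
    simp only [mem_filter, mem_powersetCard] at hS ⊢
    exact ⟨erase_subset_erase a hS.1.1, by rw [card_erase_of_mem hS.2, hS.1.2, Nat.add_sub_cancel]⟩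
  · intro T hT
    simp only [mem_filter, mem_powersetCard, subset_erase] at hT ⊢
    exact ⟨⟨insert_subset ha hT.1.1, by rw [card_insert_of_notMem hT.1.2, hT.2]⟩,
      mem_insert_self a T⟩
  · intro S hS
    exact insert_erase (mem_filter.mp hS).2
  · intro T hT
    exact erase_insert (subset_erase.mp (mem_powersetCard.mp hT).1).2

namespace Matrix

variable {m R : Type*} [DecidableEq m] [CommRing R]

theorem det_updateRow_diagonal_single [Fintype m] (d : m → R) (i j : m) :
    ((diagonal d).updateRow i (Pi.single j 1)).det =
      if i = j then ∏ x ∈ univ.erase i, d x else 0 := by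
  split_ifs with h
  · subst h
    have : (diagonal d).updateRow i (Pi.single i 1) = diagonal (Function.update d i 1) := by
      ext p q
      by_cases hp : p = i <;> simp [diagonal_apply, updateRow_apply, Pi.single_apply, hp, eq_comm]
    rw [this, det_diagonal, prod_update_of_mem (mem_univ i), sdiff_singleton_eq_erase, one_mul]
  · refine det_eq_zero_of_column_eq_zero i fun p => ?_
    by_cases hp : p = i
    · simp [hp, Ne.symm h]
    · simp [updateRow_apply, hp]

theorem det_diagonal_add_smul_single [Fintype m] (d : m → R) (i j : m) (t : R) :
    (diagonal d + t • single i j 1).det =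
      ∏ x, d x + t * if i = j then ∏ x ∈ univ.erase i, d x else 0 := by
  have : diagonal d + t • single i j 1 =
      (diagonal d).updateRow i (diagonal d i + t • Pi.single j 1) := by
    ext p q
    by_cases hp : p = i
    · subst hp
      rcases eq_or_ne q j with rfl | hq
      · simp
      · simp [hq, hq.symm]
    · simp [updateRow_apply, hp, Ne.symm hp]
  rw [this, det_updateRow_add, det_updateRow_smul, updateRow_eq_self, det_diagonal,
    det_updateRow_diagonal_single]

theorem submatrix_single_subtype_val {α : Type*} [Zero α] (S : Finset m) {i j : m} (hi : i ∈ S)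
    (hj : j ∈ S) (r : α) :
    (single i j r).submatrix (Subtype.val : S → m) Subtype.val = single ⟨i, hi⟩ ⟨j, hj⟩ r := by
  ext p q
  simp [single_apply, Subtype.ext_iff, eq_comm]

theorem submatrix_single_subtype_val_of_notMem {α : Type*} [Zero α] (S : Finset m) {i j : m}
    (h : ¬(i ∈ S ∧ j ∈ S)) (r : α) :
    (single i j r).submatrix (Subtype.val : S → m) (Subtype.val : S → m) = 0 := by
  ext p q
  rw [submatrix_apply, single_apply, if_neg, zero_apply]
  rintro ⟨rfl, rfl⟩
  exact h ⟨p.2, q.2⟩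

theorem det_submatrix_diagonal_add_smul_single [Fintype m] (S : Finset m) (d : m → R) (i j : m)
    (t : R) :
    ((diagonal d + t • single i j 1).submatrix (Subtype.val : S → m) Subtype.val).det =
      ∏ x ∈ S, d x + t * if i = j ∧ i ∈ S then ∏ x ∈ S.erase i, d x else 0 := by
  simp only [submatrix_add, submatrix_smul, Pi.add_apply, Pi.smul_apply,
    submatrix_diagonal _ _ Subtype.val_injective]
  by_cases hS : i ∈ S ∧ j ∈ S
  · rw [submatrix_single_subtype_val S hS.1 hS.2, det_diagonal_add_smul_single]
    simp only [Subtype.mk.injEq, univ_eq_attach, Function.comp_apply, prod_erase_attach,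
      prod_attach, hS.1, and_true]
  · rw [submatrix_single_subtype_val_of_notMem S hS, smul_zero, add_zero, det_diagonal,
      if_neg (by rintro ⟨rfl, hi⟩; exact hS ⟨hi, hi⟩), mul_zero, add_zero]
    exact prod_coe_sort S d

end Matrix

theorem sumPrincipalMinors_diagonal_add_smul_single {n : ℕ} (k : ℕ) (lam : Fin n → ℝ)
    (i j : Fin n) (t : ℝ) :
    sumPrincipalMinors (k + 1) (Matrix.diagonal lam + t • Matrix.single i j 1) =
      esymm (k + 1) lam + t * if i = j then esymmDel i k lam else 0 := by
  simp only [sumPrincipalMinors, Matrix.det_submatrix_diagonal_add_smul_single, sum_add_distrib,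
    ← mul_sum]
  congr 2
  split_ifs with h
  · subst h
    simp only [true_and, ← sum_filter]
    exact sum_powersetCard_succ_filter_mem (mem_univ i) k fun T => ∏ x ∈ T, lam x
  · simp [h]

theorem deriv_sumPrincipalMinors_diagonal_general (n k : ℕ) (hk1 : 1 ≤ k)
    (lam : Fin n → ℝ) (i j : Fin n) :
    deriv (fun t : ℝ =>
        sumPrincipalMinors k (Matrix.diagonal lam + t • Matrix.single i j 1)) 0 =
      if i = j then esymmDel i (k - 1) lam else 0 := by
  obtain ⟨k, rfl⟩ : ∃ k', k = k' + 1 := ⟨k - 1, by omega⟩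
  simp_rw [sumPrincipalMinors_diagonal_add_smul_single, Nat.add_sub_cancel]
  exact (((hasDerivAt_id 0).mul_const _).const_add _).deriv.trans (one_mul _)

theorem deriv_sumPrincipalMinors_diagonal (n k : ℕ) (hk1 : 1 ≤ k) (hkn : k ≤ n)
    (lam : Fin n → ℝ) (i j : Fin n) :
    deriv (fun t : ℝ =>
        sumPrincipalMinors k (Matrix.diagonal lam + t • Matrix.single i j 1)) 0 =
      if i = j then esymmDel i (k - 1) lam else 0 :=
  deriv_sumPrincipalMinors_diagonal_general n k hk1 lam i j
end
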